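/- The distortion D(Λ,Q) of the uniformly quantized Laplace source is monotonically nondecreasing in Q for fixed Λ > 0, with 0 < D(Λ,Q) < 2/Λ² for all Q > 0. -/

import Mathlib

/-!
Substituting `u = exp (ΛQ/2)` collapses the closed form to `D(Λ,Q) = (2/Λ²)(1 - t / sinh t)` with
`t = ΛQ/2`. On `(0,∞)` the function `t / sinh t` takes values in `(0,1)` because `t < sinh t`, and it
is decreasing because its derivative has the sign of `sinh t - t cosh t < 0`, i.e. `tanh t < t`.
-/

/-- Closed-form distortion of the uniformly quantized Laplace(Λ) source. -/
noncomputable def quantLaplaceDist (Λ Q : ℝ) : ℝ :=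
  (2 - (1 / 4) * Real.exp (-Λ * Q / 2) * (Λ ^ 2 * Q ^ 2 + 4 * (Λ * Q) + 8)) / Λ ^ 2
    + ((-(Λ * Q) * (Λ * Q + 4) + Real.exp (Λ * Q) * ((Λ * Q) * (Λ * Q - 4) + 8) - 8)
          / (4 * Λ ^ 2))
        * (Real.exp (-(3 / 2) * (Λ * Q)) / (1 - Real.exp (-Λ * Q)))

open Real Set

namespace Real

theorem sinh_lt_mul_cosh {x : ℝ} (hx : 0 < x) : sinh x < x * cosh x := by
  have hmono : StrictMonoOn (fun t => t * cosh t - sinh t) (Ici 0) := by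
    refine strictMonoOn_of_deriv_pos (convex_Ici 0) (by fun_prop) fun t ht => ?_
    rw [interior_Ici] at ht
    have hderiv : HasDerivAt (fun t => t * cosh t - sinh t) (t * sinh t) t :=
      (((hasDerivAt_id' t).mul (hasDerivAt_cosh t)).sub (hasDerivAt_sinh t)).congr_deriv (by ring)
    rw [hderiv.deriv]
    exact mul_pos ht (sinh_pos_iff.2 ht)
  simpa using hmono self_mem_Ici hx.le hx

theorem strictAntiOn_div_sinh : StrictAntiOn (fun x => x / sinh x) (Ioi 0) := by
  refine strictAntiOn_of_deriv_neg (convex_Ioi 0)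
    (continuousOn_id.div (by fun_prop) fun x hx => (sinh_pos_iff.2 hx).ne') fun x hx => ?_
  rw [interior_Ioi] at hx
  have hsinh : 0 < sinh x := sinh_pos_iff.2 hx
  have hderiv : HasDerivAt (fun x => x / sinh x) ((sinh x - x * cosh x) / sinh x ^ 2) x :=
    ((hasDerivAt_id' x).div (hasDerivAt_sinh x) hsinh.ne').congr_deriv (by ring)
  rw [hderiv.deriv]
  have := sinh_lt_mul_cosh hx
  exact div_neg_of_neg_of_pos (by linarith) (by positivity)

theorem div_sinh_pos {x : ℝ} (hx : 0 < x) : 0 < x / sinh x :=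
  div_pos hx (sinh_pos_iff.2 hx)

theorem div_sinh_lt_one {x : ℝ} (hx : 0 < x) : x / sinh x < 1 :=
  (div_lt_one (sinh_pos_iff.2 hx)).2 (self_lt_sinh_iff.2 hx)

end Real

theorem quantLaplaceDist_eq {Λ Q : ℝ} (hΛQ : Λ * Q ≠ 0) :
    quantLaplaceDist Λ Q = 2 * (1 - (Λ * Q / 2) / sinh (Λ * Q / 2)) / Λ ^ 2 := by
  set u := exp (Λ * Q / 2) with hu
  have hu0 : 0 < u := exp_pos _
  have hu1 : u ≠ 1 := by
    rw [hu, Ne, exp_eq_one_iff]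
    exact div_ne_zero hΛQ two_ne_zero
  have hu2 : u ^ 2 - 1 ≠ 0 := by
    intro h
    exact hu1 (by nlinarith [sq_nonneg (u - 1)])
  have e1 : exp (-Λ * Q / 2) = u⁻¹ := by rw [hu, ← exp_neg]; ring_nf
  have e2 : exp (Λ * Q) = u ^ 2 := by rw [hu, ← exp_nat_mul]; ring_nf
  have e3 : exp (-(3 / 2) * (Λ * Q)) = (u ^ 3)⁻¹ := by rw [hu, ← exp_nat_mul, ← exp_neg]; ring_nf
  have e4 : exp (-Λ * Q) = (u ^ 2)⁻¹ := by rw [hu, ← exp_nat_mul, ← exp_neg]; ring_nf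
  have esinh : sinh (Λ * Q / 2) = (u - u⁻¹) / 2 := by rw [sinh_eq, hu, exp_neg]
  have hΛ : Λ ≠ 0 := left_ne_zero_of_mul hΛQ
  rw [quantLaplaceDist, e1, e2, e3, e4, esinh]
  field_simp
  ring

/-- `D(Λ,·)` is monotonically nondecreasing on `(0,∞)` and satisfies
`0 < D(Λ,Q) < 2/Λ²` for all `Q > 0`. -/
theorem quantLaplaceDist_monotone_and_bounded (Λ : ℝ) (hΛ : 0 < Λ) :
    MonotoneOn (fun Q => quantLaplaceDist Λ Q) (Set.Ioi 0) ∧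
      ∀ Q : ℝ, 0 < Q → 0 < quantLaplaceDist Λ Q ∧ quantLaplaceDist Λ Q < 2 / Λ ^ 2 := by
  have hx : ∀ Q : ℝ, 0 < Q → 0 < Λ * Q / 2 := fun Q hQ => by positivity
  have hD : ∀ Q : ℝ, 0 < Q →
      quantLaplaceDist Λ Q = 2 * (1 - (Λ * Q / 2) / sinh (Λ * Q / 2)) / Λ ^ 2 :=
    fun Q hQ => quantLaplaceDist_eq (mul_pos hΛ hQ).ne'
  refine ⟨fun a ha b hb hab => ?_, fun Q hQ => ?_⟩
  · have hf := strictAntiOn_div_sinh.antitoneOn (hx a ha) (hx b hb) (by gcongr)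
    simp only [hD a ha, hD b hb]
    gcongr 2 * (1 - ?_) / _
  · rw [hD Q hQ]
    have hf_pos := div_sinh_pos (hx Q hQ)
    have hf_lt := div_sinh_lt_one (hx Q hQ)
    constructor
    · have : 0 < 1 - Λ * Q / 2 / sinh (Λ * Q / 2) := sub_pos.2 hf_lt
      positivity
    · gcongr
      linarith
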